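/- Let T be a tree with positive edge weights, no degree-2 vertices, and at least three leaves, and let u, v ∈ L(T) be distinct leaves maximizing z(u,v) := d(u,v) + Σ_{x ∈ L(T)} d(x,p_{uv}) over all pairs of distinct leaves, where p_{uv} is the unique u-v-path. Then u and v form a cherry in T (are adjacent to a common vertex w), and ℓ(w) = z(u,v) for the mid-point w. -/

import Mathlib

open SimpleGraph Finset

noncomputable section

variable {V : Type*}

/-- The weight of a walk: sum of the weights of its edges. -/
def walkWeight {G : SimpleGraph V} (w : Sym2 V → ℝ) {x y : V} (p : G.Walk x y) : ℝ :=
  (p.edges.map w).sum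

/-- The unique path between two vertices of a tree. -/
noncomputable def tpath {G : SimpleGraph V} (hT : G.IsTree) (x y : V) : G.Walk x y :=
  (hT.existsUnique_path x y).choose

/-- The weighted distance between two vertices of a tree: the weight of the unique path. -/
noncomputable def tdist {G : SimpleGraph V} (hT : G.IsTree) (w : Sym2 V → ℝ) (x y : V) : ℝ :=
  walkWeight w (tpath hT x y)

/-- The distance from a vertex `x` to a path `p`: the minimum distance from `x`
to a vertex on `p`. -/
noncomputable def distToPath {G : SimpleGraph V} (hT : G.IsTree) (w : Sym2 V → ℝ)
    (x : V) {a b : V} (p : G.Walk a b) : ℝ :=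
  sInf {r | ∃ y ∈ p.support, r = tdist hT w x y}

/-- The set of leaves of a graph. -/
def leaves (G : SimpleGraph V) [Fintype V] [DecidableRel G.Adj] : Finset V :=
  Finset.univ.filter (fun v => G.degree v = 1)

/-- The leaf-status of a vertex: the sum of its distances to all leaves. -/
noncomputable def leafStatus {G : SimpleGraph V} [Fintype V] [DecidableRel G.Adj]
    (hT : G.IsTree) (w : Sym2 V → ℝ) (u : V) : ℝ :=
  ∑ x ∈ leaves G, tdist hT w u x

/-- The leaf-status of a path: the sum of the distances of all leaves to the path. -/
noncomputable def pathLeafStatus {G : SimpleGraph V} [Fintype V] [DecidableRel G.Adj]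
    (hT : G.IsTree) (w : Sym2 V → ℝ) {a b : V} (p : G.Walk a b) : ℝ :=
  ∑ x ∈ leaves G, distToPath hT w x p

/-- `Lside hT w u v` is the set `L^{uv}_u` of leaves strictly closer to `u` than to `v`. -/
noncomputable def Lside {G : SimpleGraph V} [Fintype V] [DecidableRel G.Adj]
    (hT : G.IsTree) (w : Sym2 V → ℝ) (u v : V) : Finset V :=
  (leaves G).filter (fun x => tdist hT w x u < tdist hT w x v)

/-! Write `z(a,b)` for the score of a pair of leaves. If `a, b` is a cherry with mid-point `m`,
every other leaf reaches the path `a m b` at `m`, so `ℓ(m) = z(a,b)`. For a vertex `y` on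
`p_uv`, each leaf contributes `d(y,x) - d(x,p_uv) ≥ 0` to `ℓ(y) - Σ_x d(x,p_uv)`, and `u, v`
contribute `d(u,v)`; so if `p_uv = u m₁ m₂ … v` with `m₂ ≠ v`, a leaf behind a third neighbour
of `m₂` (no vertex has degree 2) gives `ℓ(m₁) > z(u,v)`.

On the other hand `ℓ` is maximised over internal vertices at a cherry mid-point: across an edge
`pq`, `ℓ(p) - ℓ(q) = (2·#(leaves behind q) - #L)·w(pq)`, so at a maximum `p` every internal
neighbour has at least half of the leaves behind it. Two internal neighbours would leave no leaf
behind a third one, so `p` has two leaf neighbours. Unless `p_uv` is itself a cherry, the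
cherry at `p` scores `ℓ(p) ≥ ℓ(m₁) > z(u,v)`, contradicting maximality. -/

variable {G : SimpleGraph V}

section TreePath

variable (hT : G.IsTree)

lemma tpath_isPath (x y : V) : (tpath hT x y).IsPath :=
  (hT.existsUnique_path x y).choose_spec.1

lemma tpath_eq {x y : V} {p : G.Walk x y} (hp : p.IsPath) : tpath hT x y = p :=
  ((hT.existsUnique_path x y).choose_spec.2 p hp).symm

lemma tpath_self (x : V) : tpath hT x x = Walk.nil :=
  tpath_eq hT Walk.IsPath.nil

lemma tpath_reverse (x y : V) : (tpath hT x y).reverse = tpath hT y x :=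
  (tpath_eq hT (tpath_isPath hT x y).reverse).symm

lemma mem_support_tpath_comm {x y q : V} :
    q ∈ (tpath hT x y).support ↔ q ∈ (tpath hT y x).support := by
  rw [← tpath_reverse hT y x, Walk.support_reverse, List.mem_reverse]

lemma tpath_adj {x y : V} (h : G.Adj x y) : tpath hT x y = Walk.cons h Walk.nil :=
  tpath_eq hT (Walk.IsPath.nil.cons (by simpa using h.ne))

lemma tpath_eq_cons {x y : V} (hxy : x ≠ y) :
    ∃ (t : V) (h : G.Adj x t), tpath hT x y = Walk.cons h (tpath hT t y) := by
  cases hp : tpath hT x y with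
  | nil => exact absurd rfl hxy
  | cons h q =>
    have hq : q.IsPath := by
      have := tpath_isPath hT x y
      rw [hp] at this
      exact this.of_cons
    exact ⟨_, h, by rw [tpath_eq hT hq]⟩

lemma tpath_eq_append [DecidableEq V] {x y q : V} (hq : q ∈ (tpath hT x y).support) :
    tpath hT x y = (tpath hT x q).append (tpath hT q y) := by
  have hP := tpath_isPath hT x y
  rw [tpath_eq hT (hP.takeUntil hq), tpath_eq hT (hP.dropUntil hq), Walk.take_spec]

lemma tpath_eq_cons_of_notMem {p q x : V} (h : G.Adj q p) (hq : q ∉ (tpath hT p x).support) :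
    tpath hT q x = Walk.cons h (tpath hT p x) :=
  tpath_eq hT ((tpath_isPath hT p x).cons hq)

lemma eq_of_adj_of_mem_support_tpath {p q q' x : V} (hq : G.Adj p q) (hq' : G.Adj p q')
    (hqx : q ∈ (tpath hT p x).support) (hq'x : q' ∈ (tpath hT p x).support) : q = q' :=
  (hT.isAcyclic.eq_snd_of_adj_start (tpath_isPath hT p x) hq hqx).trans
    (hT.isAcyclic.eq_snd_of_adj_start (tpath_isPath hT p x) hq' hq'x).symm

lemma tpath_eq_cons_of_degree_eq_one [Fintype V] [DecidableRel G.Adj] {u m y : V}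
    (hu : G.degree u = 1) (hum : G.Adj u m) (hy : y ≠ u) :
    tpath hT u y = Walk.cons hum (tpath hT m y) := by
  obtain ⟨t, hut, hpath⟩ := tpath_eq_cons hT hy.symm
  obtain rfl : t = m :=
    (degree_eq_one_iff_existsUnique_adj.1 hu).unique hut hum
  exact hpath

end TreePath

section Distance

variable (hT : G.IsTree) (w : Sym2 V → ℝ)

@[simp] lemma walkWeight_nil {x : V} : walkWeight w (Walk.nil : G.Walk x x) = 0 := rfl

@[simp] lemma walkWeight_cons {x y z : V} (h : G.Adj x y) (p : G.Walk y z) :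
    walkWeight w (Walk.cons h p) = w s(x, y) + walkWeight w p := by
  simp [walkWeight]

lemma walkWeight_append {x y z : V} (p : G.Walk x y) (q : G.Walk y z) :
    walkWeight w (p.append q) = walkWeight w p + walkWeight w q := by
  simp [walkWeight, Walk.edges_append]

lemma walkWeight_nonneg (hw : ∀ e ∈ G.edgeSet, 0 < w e) {x y : V} (p : G.Walk x y) :
    0 ≤ walkWeight w p :=
  List.sum_nonneg <| by
    intro r hr
    obtain ⟨e, he, rfl⟩ := List.mem_map.1 hr
    exact (hw e (p.edges_subset_edgeSet he)).le

@[simp] lemma tdist_self (x : V) : tdist hT w x x = 0 := by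
  simp [tdist, tpath_self]

lemma tdist_symm (x y : V) : tdist hT w x y = tdist hT w y x := by
  rw [tdist, tdist, ← tpath_reverse hT y x, walkWeight, walkWeight, Walk.edges_reverse,
    List.map_reverse, List.sum_reverse]

lemma tdist_adj {x y : V} (h : G.Adj x y) : tdist hT w x y = w s(x, y) := by
  simp [tdist, tpath_adj hT h]

lemma tdist_nonneg (hw : ∀ e ∈ G.edgeSet, 0 < w e) (x y : V) : 0 ≤ tdist hT w x y :=
  walkWeight_nonneg w hw _

lemma tdist_eq_add_of_mem_support [DecidableEq V] {x y q : V}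
    (hq : q ∈ (tpath hT x y).support) : tdist hT w x y = tdist hT w x q + tdist hT w q y := by
  rw [tdist, tpath_eq_append hT hq, walkWeight_append, tdist, tdist]

lemma tdist_eq_add_of_tpath_eq_cons {x y t : V} {h : G.Adj x t}
    (hpath : tpath hT x y = Walk.cons h (tpath hT t y)) :
    tdist hT w x y = w s(x, t) + tdist hT w t y := by
  rw [tdist, hpath, walkWeight_cons, tdist]

lemma distToPath_le {x a b y : V} {p : G.Walk a b} (hy : y ∈ p.support) :
    distToPath hT w x p ≤ tdist hT w x y := by
  refine csInf_le ?_ ⟨y, hy, rfl⟩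
  refine ((p.support.finite_toSet.image (tdist hT w x)).subset ?_).bddBelow
  rintro _ ⟨z, hz, rfl⟩
  exact ⟨z, hz, rfl⟩

lemma distToPath_eq_zero (hw : ∀ e ∈ G.edgeSet, 0 < w e) {x a b : V} {p : G.Walk a b}
    (hx : x ∈ p.support) : distToPath hT w x p = 0 := by
  refine le_antisymm (by simpa using distToPath_le hT w (x := x) hx) ?_
  refine le_csInf ⟨_, a, p.start_mem_support, rfl⟩ ?_
  rintro _ ⟨z, -, rfl⟩
  exact tdist_nonneg hT w hw x z

lemma distToPath_eq_tdist {x a b y : V} {p : G.Walk a b} (hy : y ∈ p.support)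
    (hmin : ∀ z ∈ p.support, tdist hT w x y ≤ tdist hT w x z) :
    distToPath hT w x p = tdist hT w x y := by
  refine le_antisymm (distToPath_le hT w hy) ?_
  refine le_csInf ⟨_, a, p.start_mem_support, rfl⟩ ?_
  rintro _ ⟨z, hz, rfl⟩
  exact hmin z hz

end Distance

section Degree

variable [Fintype V] [DecidableRel G.Adj]

lemma three_le_degree_of_adj {p a b : V} (hp : G.degree p ≠ 2) (ha : G.Adj p a)
    (hb : G.Adj p b) (hab : a ≠ b) : 3 ≤ G.degree p := by
  classical
  have : #({a, b} : Finset V) ≤ G.degree p := by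
    rw [← card_neighborFinset_eq_degree]
    exact card_le_card (by simp [insert_subset_iff, ha, hb])
  rw [card_pair hab] at this
  omega

lemma exists_adj_ne_ne_of_three_le_degree {p : V} (hp : 3 ≤ G.degree p) (a b : V) :
    ∃ c, G.Adj p c ∧ c ≠ a ∧ c ≠ b := by
  classical
  have hpos : 0 < #(G.neighborFinset p \ {a, b}) := by
    have := le_card_sdiff {a, b} (G.neighborFinset p)
    have := card_le_two (a := a) (b := b)
    rw [card_neighborFinset_eq_degree] at *
    omega
  obtain ⟨c, hc⟩ := card_pos.1 hpos
  simp only [mem_sdiff, mem_neighborFinset, mem_insert, mem_singleton, not_or] at hc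
  exact ⟨c, hc.1, hc.2⟩

end Degree

section LeafStatus

variable [Fintype V] [DecidableRel G.Adj] (hT : G.IsTree) (w : Sym2 V → ℝ)

@[simp] lemma mem_leaves_iff {x : V} : x ∈ leaves G ↔ G.degree x = 1 := by
  simp [leaves]

/-- The score `z(u,v) = d(u,v) + Σ_{x ∈ L(T)} d(x, p_{uv})`. -/
def pathScore (u v : V) : ℝ :=
  tdist hT w u v + pathLeafStatus hT w (tpath hT u v)

/-- For a neighbour `q` of `p`: the leaves in the component of `T - p` containing `q`. -/
def leavesBehind [DecidableEq V] (p q : V) : Finset V :=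
  (leaves G).filter fun x => q ∈ (tpath hT p x).support

lemma leafStatus_sub_leafStatus_of_adj [DecidableEq V] {p q : V} (hpq : G.Adj p q) :
    leafStatus hT w p - leafStatus hT w q =
      (2 * #(leavesBehind hT p q) - #(leaves G) : ℝ) * w s(p, q) := by
  have behind : ∀ x ∈ leavesBehind hT p q, tdist hT w p x - tdist hT w q x = w s(p, q) := by
    intro x hx
    rw [tdist_eq_add_of_mem_support hT w (mem_filter.1 hx).2, tdist_adj hT w hpq]
    ring
  have ahead : ∀ x ∈ (leaves G).filter (fun x => q ∉ (tpath hT p x).support),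
      tdist hT w p x - tdist hT w q x = -w s(p, q) := by
    intro x hx
    rw [tdist_eq_add_of_tpath_eq_cons hT w
      (tpath_eq_cons_of_notMem hT hpq.symm (mem_filter.1 hx).2), Sym2.eq_swap]
    ring
  have hcard : #(leavesBehind hT p q) +
      #((leaves G).filter (fun x => q ∉ (tpath hT p x).support)) = #(leaves G) :=
    card_filter_add_card_filter_not _
  rw [leafStatus, leafStatus, ← sum_sub_distrib,
    ← sum_filter_add_sum_filter_not _ (fun x => q ∈ (tpath hT p x).support)]
  change ∑ x ∈ leavesBehind hT p q, _ + _ = _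
  rw [sum_congr rfl behind, sum_congr rfl ahead, sum_const, sum_const, ← hcard]
  simp only [nsmul_eq_mul, Nat.cast_add]
  ring

lemma card_leaves_le_two_mul_card_leavesBehind [DecidableEq V]
    (hw : ∀ e ∈ G.edgeSet, 0 < w e) {p q : V} (hpq : G.Adj p q)
    (hle : leafStatus hT w q ≤ leafStatus hT w p) :
    #(leaves G) ≤ 2 * #(leavesBehind hT p q) := by
  have hdiff := leafStatus_sub_leafStatus_of_adj hT w hpq
  have hwpq : 0 < w s(p, q) := hw _ hpq
  have : (#(leaves G) : ℝ) ≤ 2 * #(leavesBehind hT p q) := by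
    by_contra! h
    nlinarith
  exact_mod_cast this

lemma disjoint_leavesBehind [DecidableEq V] {p q q' : V} (hq : G.Adj p q) (hq' : G.Adj p q')
    (hne : q ≠ q') : Disjoint (leavesBehind hT p q) (leavesBehind hT p q') :=
  disjoint_left.2 fun _ hx hx' =>
    hne (eq_of_adj_of_mem_support_tpath hT hq hq' (mem_filter.1 hx).2 (mem_filter.1 hx').2)

/-- A vertex of the branch farthest from `p` is a leaf. -/
lemma leavesBehind_nonempty [DecidableEq V] {p q : V} (hpq : G.Adj p q) :
    (leavesBehind hT p q).Nonempty := by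
  let S := univ.filter fun y => q ∈ (tpath hT y p).support
  have hqS : q ∈ S := mem_filter.2 ⟨mem_univ _, Walk.start_mem_support _⟩
  obtain ⟨x, hxS, hxmax⟩ := exists_max_image S (fun y => (tpath hT y p).length) ⟨q, hqS⟩
  have hqx : q ∈ (tpath hT x p).support := (mem_filter.1 hxS).2
  have hxp : x ≠ p := by
    rintro rfl
    simp [tpath_self, hpq.ne'] at hqx
  obtain ⟨t, hxt, hpath⟩ := tpath_eq_cons hT hxp
  have ht : t ∈ (tpath hT x p).support := by simp [hpath]
  refine ⟨x, mem_filter.2 ⟨mem_leaves_iff.2 ?_, (mem_support_tpath_comm hT).1 hqx⟩⟩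
  refine degree_eq_one_iff_existsUnique_adj.2 ⟨t, hxt, fun t' hxt' => ?_⟩
  by_contra hne
  have ht' : t' ∉ (tpath hT x p).support :=
    fun ht' => hne (eq_of_adj_of_mem_support_tpath hT hxt' hxt ht' ht)
  have hpath' := tpath_eq_cons_of_notMem hT hxt'.symm ht'
  have hlen := hxmax t' (mem_filter.2 ⟨mem_univ _, by simp [hpath', hqx]⟩)
  simp [hpath'] at hlen

lemma card_leaves_le_two_of_adj (hT : G.IsTree) {u v : V} (hu : G.degree u = 1)
    (hv : G.degree v = 1) (huv : G.Adj u v) : #(leaves G) ≤ 2 := by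
  classical
  have hall : ∀ x, x = u ∨ x = v := by
    intro x
    by_contra! hx
    have hP := tpath_isPath hT u x
    rw [tpath_eq_cons_of_degree_eq_one hT hu huv hx.1, Walk.cons_isPath_iff,
      tpath_eq_cons_of_degree_eq_one hT hv huv.symm hx.2] at hP
    simp at hP
  calc #(leaves G) ≤ #({u, v} : Finset V) := card_le_card fun x _ => by simpa using hall x
    _ ≤ 2 := card_le_two

lemma leafStatus_eq_pathScore_of_cherry (hw : ∀ e ∈ G.edgeSet, 0 < w e) {a b m : V}
    (ha : G.degree a = 1) (hb : G.degree b = 1) (hab : a ≠ b)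
    (ham : G.Adj a m) (hbm : G.Adj b m) :
    leafStatus hT w m = pathScore hT w a b := by
  have hpath : tpath hT a b = Walk.cons ham (Walk.cons hbm.symm Walk.nil) :=
    tpath_eq hT (by simp [ham.ne, hab, hbm.ne'])
  have hsupp : (tpath hT a b).support = [a, m, b] := by simp [hpath]
  have hab_dist : tdist hT w a b = tdist hT w m a + tdist hT w m b := by
    rw [tdist_adj hT w ham.symm, tdist_adj hT w hbm.symm, tdist, hpath]
    simp [Sym2.eq_swap]
  have hother : ∀ x ∈ leaves G, x ≠ a ∧ x ≠ b →
      tdist hT w m x - distToPath hT w x (tpath hT a b) = 0 := by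
    rintro x - ⟨hxa, hxb⟩
    have hxa' := tdist_eq_add_of_tpath_eq_cons hT w (tpath_eq_cons_of_degree_eq_one hT ha ham hxa)
    have hxb' := tdist_eq_add_of_tpath_eq_cons hT w (tpath_eq_cons_of_degree_eq_one hT hb hbm hxb)
    have hwa : 0 < w s(a, m) := hw _ ham
    have hwb : 0 < w s(b, m) := hw _ hbm
    rw [distToPath_eq_tdist hT w (y := m) (by simp [hsupp]), tdist_symm hT w x m, sub_self]
    intro z hz
    rw [tdist_symm hT w x m, tdist_symm hT w x z]
    simp only [hsupp, List.mem_cons, List.not_mem_nil, or_false] at hz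
    rcases hz with rfl | rfl | rfl <;> linarith
  have hsum := sum_eq_add_of_mem a b (mem_leaves_iff.2 ha) (mem_leaves_iff.2 hb) hab hother
  rw [distToPath_eq_zero hT w hw (by simp [hsupp]), distToPath_eq_zero hT w hw (by simp [hsupp]),
    sum_sub_distrib] at hsum
  rw [pathScore, hab_dist, pathLeafStatus, leafStatus]
  linarith

lemma exists_two_leaf_neighbors [DecidableEq V] (hw : ∀ e ∈ G.edgeSet, 0 < w e) {p : V}
    (hp : 3 ≤ G.degree p)
    (hmax : ∀ q, G.Adj p q → G.degree q ≠ 1 → leafStatus hT w q ≤ leafStatus hT w p) :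
    ∃ a b, a ≠ b ∧ G.Adj a p ∧ G.Adj b p ∧ G.degree a = 1 ∧ G.degree b = 1 := by
  by_contra! hleaf
  have hinner : 1 < #((G.neighborFinset p).filter fun q => ¬G.degree q = 1) := by
    have hleaves : #((G.neighborFinset p).filter fun q => G.degree q = 1) ≤ 1 := by
      refine card_le_one.2 fun a ha b hb => ?_
      simp only [mem_filter, mem_neighborFinset] at ha hb
      by_contra hab
      exact hleaf a b hab ha.1.symm hb.1.symm ha.2 hb.2
    have := card_filter_add_card_filter_not (s := G.neighborFinset p) fun q => G.degree q = 1
    rw [card_neighborFinset_eq_degree] at this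
    omega
  obtain ⟨q, hq, q', hq', hqq'⟩ := one_lt_card.1 hinner
  simp only [mem_filter, mem_neighborFinset] at hq hq'
  obtain ⟨r, hr, hrq, hrq'⟩ := exists_adj_ne_ne_of_three_le_degree hp q q'
  have hBq := card_leaves_le_two_mul_card_leavesBehind hT w hw hq.1 (hmax q hq.1 hq.2)
  have hBq' := card_leaves_le_two_mul_card_leavesBehind hT w hw hq'.1 (hmax q' hq'.1 hq'.2)
  have hBr := (leavesBehind_nonempty hT hr).card_pos
  have hsub : leavesBehind hT p q ∪ leavesBehind hT p q' ∪ leavesBehind hT p r ⊆ leaves G :=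
    union_subset (union_subset (filter_subset _ _) (filter_subset _ _)) (filter_subset _ _)
  have hcard := card_le_card hsub
  rw [card_union_of_disjoint (disjoint_union_left.2 ⟨disjoint_leavesBehind hT hq.1 hr hrq.symm,
      disjoint_leavesBehind hT hq'.1 hr hrq'.symm⟩),
    card_union_of_disjoint (disjoint_leavesBehind hT hq.1 hq'.1 hqq')] at hcard
  omega

lemma exists_cherry_le_leafStatus [Nontrivial V] (hw : ∀ e ∈ G.edgeSet, 0 < w e)
    (hdeg : ∀ x : V, G.degree x ≠ 2) {y : V} (hy : G.degree y ≠ 1) :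
    ∃ a b m, a ≠ b ∧ G.degree a = 1 ∧ G.degree b = 1 ∧ G.Adj a m ∧ G.Adj b m ∧
      leafStatus hT w y ≤ leafStatus hT w m := by
  classical
  let I := univ.filter fun x => G.degree x ≠ 1
  obtain ⟨m, hmI, hmax⟩ := exists_max_image I (leafStatus hT w) ⟨y, by simp [I, hy]⟩
  have hm : G.degree m ≠ 1 := (mem_filter.1 hmI).2
  have hpos := hT.connected.preconnected.degree_pos_of_nontrivial m
  obtain ⟨a, b, hab, ham, hbm, ha, hb⟩ := exists_two_leaf_neighbors hT w hw
    (by have := hdeg m; omega) fun q _ hq => hmax q (by simp [I, hq])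
  exact ⟨a, b, m, hab, ha, hb, ham, hbm, hmax y (by simp [I, hy])⟩

lemma pathScore_add_le_leafStatus [DecidableEq V] (hw : ∀ e ∈ G.edgeSet, 0 < w e)
    {u v s y : V} (hu : u ∈ leaves G) (hv : v ∈ leaves G) (hs : s ∈ leaves G) (huv : u ≠ v)
    (hsu : s ≠ u) (hsv : s ≠ v) (hy : y ∈ (tpath hT u v).support) :
    pathScore hT w u v + (tdist hT w y s - distToPath hT w s (tpath hT u v)) ≤
      leafStatus hT w y := by
  set F := fun x => tdist hT w y x - distToPath hT w x (tpath hT u v)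
  have hF : ∀ x ∈ leaves G, 0 ≤ F x := fun x _ => by
    have := distToPath_le hT w (x := x) hy
    rw [tdist_symm] at this
    simp only [F]
    linarith
  have hsum : F u + F v + F s ≤ ∑ x ∈ leaves G, F x := by
    have := sum_le_sum_of_subset_of_nonneg (f := F) (s := {u, v, s}) (t := leaves G)
      (by simp [insert_subset_iff, hu, hv, hs]) fun x hx _ => hF x hx
    rwa [sum_insert (by simp [huv, hsu.symm]), sum_pair hsv.symm, ← add_assoc] at this
  have hsplit := tdist_eq_add_of_mem_support hT w hy
  simp only [F, distToPath_eq_zero hT w hw (Walk.start_mem_support _),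
    distToPath_eq_zero hT w hw (Walk.end_mem_support _), sum_sub_distrib] at hsum
  rw [pathScore, hsplit, tdist_symm hT w u y, leafStatus, pathLeafStatus]
  linarith

lemma pathScore_lt_leafStatus [DecidableEq V] (hw : ∀ e ∈ G.edgeSet, 0 < w e)
    (hdeg : ∀ x : V, G.degree x ≠ 2) {u v m₁ m₂ : V} (hu : G.degree u = 1) (hv : G.degree v = 1)
    (h₁ : G.Adj u m₁) (h₂ : G.Adj m₁ m₂)
    (hpath : tpath hT u v = Walk.cons h₁ (Walk.cons h₂ (tpath hT m₂ v))) (hm₂v : m₂ ≠ v) :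
    pathScore hT w u v < leafStatus hT w m₁ := by
  have hP := tpath_isPath hT u v
  simp only [hpath, Walk.cons_isPath_iff, Walk.support_cons, List.mem_cons, not_or] at hP
  obtain ⟨⟨-, hm₁v⟩, -, hu_tail⟩ := hP
  obtain ⟨n, hn, hpath₂⟩ := tpath_eq_cons hT hm₂v
  have hm₁n : m₁ ≠ n := fun h => hm₁v (by simp [hpath₂, h])
  obtain ⟨q, hq, hqm₁, hqn⟩ :=
    exists_adj_ne_ne_of_three_le_degree (three_le_degree_of_adj (hdeg m₂) h₂.symm hn hm₁n) m₁ n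
  obtain ⟨s, hs⟩ := leavesBehind_nonempty hT hq
  have hu_behind : u ∈ leavesBehind hT m₂ m₁ := by
    refine mem_filter.2 ⟨mem_leaves_iff.2 hu, (mem_support_tpath_comm hT).1 ?_⟩
    simp [tpath_eq_cons_of_degree_eq_one hT hu h₁ fun h => hu_tail (h ▸ Walk.start_mem_support _)]
  have hv_behind : v ∈ leavesBehind hT m₂ n := mem_filter.2 ⟨mem_leaves_iff.2 hv, by simp [hpath₂]⟩
  have hsu : s ≠ u := by
    rintro rfl
    exact disjoint_left.1 (disjoint_leavesBehind hT hq h₂.symm hqm₁) hs hu_behind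
  have hsv : s ≠ v := by
    rintro rfl
    exact disjoint_left.1 (disjoint_leavesBehind hT hq hn hqn) hs hv_behind
  have hs_m₁ : tdist hT w m₁ s = w s(m₁, m₂) + tdist hT w m₂ s :=
    tdist_eq_add_of_tpath_eq_cons hT w <| tpath_eq_cons_of_notMem hT h₂ fun hm₁ =>
      hqm₁ (eq_of_adj_of_mem_support_tpath hT hq h₂.symm (mem_filter.1 hs).2 hm₁)
  have hs_path : distToPath hT w s (tpath hT u v) ≤ tdist hT w m₂ s := by
    rw [tdist_symm]
    exact distToPath_le hT w (by simp [hpath])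
  have hle := pathScore_add_le_leafStatus hT w hw (mem_leaves_iff.2 hu) (mem_leaves_iff.2 hv)
    (mem_filter.1 hs).1 (fun h => hu_tail (h ▸ Walk.end_mem_support _)) hsu hsv
    (y := m₁) (by simp [hpath])
  have hw₁₂ : 0 < w s(m₁, m₂) := hw _ h₂
  linarith

end LeafStatus

/-- distinct leaves `u, v` maximizing
`z(u,v) = d(u,v) + Σ_{x∈L} d(x, p_{uv})` form a cherry, whose mid-point `m`
satisfies `ℓ(m) = z(u,v)`. -/
theorem stmt9 {V : Type*} [Fintype V] {G : SimpleGraph V} [DecidableRel G.Adj]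
    (hT : G.IsTree) (w : Sym2 V → ℝ) (hw : ∀ e ∈ G.edgeSet, 0 < w e)
    (hdeg : ∀ x : V, G.degree x ≠ 2) (hL : 3 ≤ (leaves G).card)
    (u v : V) (hu : u ∈ leaves G) (hv : v ∈ leaves G) (huv : u ≠ v)
    (hmax : ∀ a ∈ leaves G, ∀ b ∈ leaves G, a ≠ b →
      tdist hT w a b + pathLeafStatus hT w (tpath hT a b) ≤
        tdist hT w u v + pathLeafStatus hT w (tpath hT u v)) :
    ∃ m : V, G.Adj u m ∧ G.Adj v m ∧
      leafStatus hT w m =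
        tdist hT w u v + pathLeafStatus hT w (tpath hT u v) := by
  classical
  have : Nontrivial V := ⟨u, v, huv⟩
  rw [mem_leaves_iff] at hu hv
  obtain ⟨m₁, hum₁, hpath₁⟩ := tpath_eq_cons hT huv
  have hm₁ : G.degree m₁ ≠ 1 := fun h => by
    have := card_leaves_le_two_of_adj hT hu h hum₁
    omega
  obtain ⟨m₂, hm₁m₂, hpath₂⟩ := tpath_eq_cons hT fun h : m₁ = v => hm₁ (h ▸ hv)
  by_cases hm₂v : m₂ = v
  · subst hm₂v
    exact ⟨m₁, hum₁, hm₁m₂.symm,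
      leafStatus_eq_pathScore_of_cherry hT w hw hu hv huv hum₁ hm₁m₂.symm⟩
  rw [hpath₂] at hpath₁
  have hlt := pathScore_lt_leafStatus hT w hw hdeg hu hv hum₁ hm₁m₂ hpath₁ hm₂v
  obtain ⟨a, b, m, hab, ha, hb, ham, hbm, hle⟩ := exists_cherry_le_leafStatus hT w hw hdeg hm₁
  have hab_le := hmax a (mem_leaves_iff.2 ha) b (mem_leaves_iff.2 hb) hab
  have hcherry := leafStatus_eq_pathScore_of_cherry hT w hw ha hb hab ham hbm
  simp only [pathScore] at hlt hcherry
  linarith
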